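/- Let φ = ∃X∀Y Θ be a quantified Boolean formula where Θ is quantifier-free and in disjunctive normal form with all variables among X ∪ Y. If φ is true, then the formula f(φ) is an instance of a binary tautology. -/

import Mathlib

namespace CirquentCalc

/-- Formulas: literals (negation applied only to atoms), ∧, ∨. -/
inductive Fml where
  | pos : ℕ → Fml
  | neg : ℕ → Fml
  | and : Fml → Fml → Fml
  | or : Fml → Fml → Fml
deriving DecidableEq

namespace Fml

/-- Negation (pushed to atoms, as ¬ applies only to atoms). -/
def negate : Fml → Fml
  | pos n => neg n
  | neg n => pos n
  | and a b => or a.negate b.negate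
  | or a b => and a.negate b.negate

/-- Substitution extended homomorphically. -/
def subst (σ : ℕ → Fml) : Fml → Fml
  | pos n => σ n
  | neg n => (σ n).negate
  | and a b => and (a.subst σ) (b.subst σ)
  | or a b => or (a.subst σ) (b.subst σ)

/-- Classical evaluation under a truth assignment. -/
def eval (v : ℕ → Bool) : Fml → Bool
  | pos n => v n
  | neg n => !(v n)
  | and a b => a.eval v && b.eval v
  | or a b => a.eval v || b.eval v

/-- Number of positive occurrences of atom `a`. -/
def cPos (a : ℕ) : Fml → ℕ
  | pos n => if n = a then 1 else 0
  | neg _ => 0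
  | and f g => f.cPos a + g.cPos a
  | or f g => f.cPos a + g.cPos a

/-- Number of negative occurrences of atom `a`. -/
def cNeg (a : ℕ) : Fml → ℕ
  | pos _ => 0
  | neg n => if n = a then 1 else 0
  | and f g => f.cNeg a + g.cNeg a
  | or f g => f.cNeg a + g.cNeg a

/-- Total number of positive occurrences of atoms. -/
def posOcc : Fml → ℕ
  | pos _ => 1
  | neg _ => 0
  | and f g => f.posOcc + g.posOcc
  | or f g => f.posOcc + g.posOcc

/-- Length: total number of occurrences of literals and connectives. -/
def len : Fml → ℕ
  | pos _ => 1
  | neg _ => 1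
  | and f g => f.len + g.len + 1
  | or f g => f.len + g.len + 1

/-- Number of occurrences of ∧. -/
def nAnd : Fml → ℕ
  | pos _ => 0
  | neg _ => 0
  | and f g => f.nAnd + g.nAnd + 1
  | or f g => f.nAnd + g.nAnd

/-- Number of occurrences of ∨. -/
def nOr : Fml → ℕ
  | pos _ => 0
  | neg _ => 0
  | and f g => f.nOr + g.nOr
  | or f g => f.nOr + g.nOr + 1

end Fml

def Tautology (A : Fml) : Prop := ∀ v, A.eval v = true

/-- No atom has more than two occurrences. -/
def Binary (A : Fml) : Prop := ∀ a, A.cPos a + A.cNeg a ≤ 2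

/-- Whenever an atom occurs twice, one occurrence is positive and one negative. -/
def Normal (A : Fml) : Prop := ∀ a, A.cPos a ≤ 1 ∧ A.cNeg a ≤ 1

def AtomicLevel (σ : ℕ → Fml) : Prop := ∀ n, ∃ m, σ n = Fml.pos m

/-- `F` is an instance of `B`: σ(B) = F for some substitution σ. -/
def InstanceOf (F B : Fml) : Prop := ∃ σ, B.subst σ = F

/-- `F` is an atomic-level instance of `B`. -/
def AtomicInstanceOf (F B : Fml) : Prop := ∃ σ, AtomicLevel σ ∧ B.subst σ = F

/-- A cirquent: a pool of (occurrences of) formulas, and a list of ogroups,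
each an (index-)set of oformulas of the pool. -/
structure Cirquent where
  pool : List Fml
  groups : List (Finset ℕ)

def emptyCirquent : Cirquent := ⟨[], []⟩

def idCirquent (F : Fml) : Cirquent := ⟨[F.negate, F], [{0, 1}]⟩

/-- The cirquent with pool ⟨F⟩ and one ogroup containing F. -/
def fmlCirquent (F : Fml) : Cirquent := ⟨[F], [{0}]⟩

/-- Index renaming swapping `i` and `i+1`. -/
def swapIdx (i : ℕ) : ℕ → ℕ := fun j => if j = i then i + 1 else if j = i + 1 then i else j

/-- Index renaming when a new oformula is inserted at position `i`. -/
def insShift (i : ℕ) : ℕ → ℕ := fun j => if j < i then j else j + 1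

/-- Index renaming when the oformulas at positions `i`, `i+1` are merged into one at `i`. -/
def mergeIdx (i : ℕ) : ℕ → ℕ := fun j => if j ≤ i then j else j - 1

/-- Mix: placing the two premise cirquents side by side. -/
def MixStep (A B C : Cirquent) : Prop :=
  C.pool = A.pool ++ B.pool ∧
  C.groups = A.groups ++ B.groups.map (Finset.image (· + A.pool.length))

/-- Oformula exchange: swap two adjacent oformulas, preserving containment. -/
def OfExchStep (P C : Cirquent) : Prop :=
  ∃ (l₁ l₂ : List Fml) (F G : Fml),
    P.pool = l₁ ++ F :: G :: l₂ ∧ C.pool = l₁ ++ G :: F :: l₂ ∧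
    C.groups = P.groups.map (Finset.image (swapIdx l₁.length))

/-- Ogroup exchange: swap two adjacent ogroups. -/
def OgExchStep (P C : Cirquent) : Prop :=
  C.pool = P.pool ∧
  ∃ (g₁ g₂ : List (Finset ℕ)) (Γ Δ : Finset ℕ),
    P.groups = g₁ ++ Γ :: Δ :: g₂ ∧ C.groups = g₁ ++ Δ :: Γ :: g₂

/-- Pool weakening: insert a new oformula, contained in no ogroup. -/
def PoolWeakStep (P C : Cirquent) : Prop :=
  ∃ (l₁ l₂ : List Fml) (F : Fml),
    P.pool = l₁ ++ l₂ ∧ C.pool = l₁ ++ F :: l₂ ∧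
    C.groups = P.groups.map (Finset.image (insShift l₁.length))

/-- Ogroup weakening: add a new arc between a pre-existing ogroup and oformula. -/
def OgWeakStep (P C : Cirquent) : Prop :=
  C.pool = P.pool ∧
  ∃ (g₁ g₂ : List (Finset ℕ)) (Γ : Finset ℕ) (j : ℕ),
    j < P.pool.length ∧ j ∉ Γ ∧
    P.groups = g₁ ++ Γ :: g₂ ∧ C.groups = g₁ ++ insert j Γ :: g₂

/-- Downward duplication: replace an ogroup by two adjacent copies of it. -/
def DupDownStep (P C : Cirquent) : Prop :=
  C.pool = P.pool ∧
  ∃ (g₁ g₂ : List (Finset ℕ)) (Γ : Finset ℕ),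
    P.groups = g₁ ++ Γ :: g₂ ∧ C.groups = g₁ ++ Γ :: Γ :: g₂

/-- Upward duplication: the converse of downward duplication. -/
def DupUpStep (P C : Cirquent) : Prop :=
  C.pool = P.pool ∧
  ∃ (g₁ g₂ : List (Finset ℕ)) (Γ : Finset ℕ),
    P.groups = g₁ ++ Γ :: Γ :: g₂ ∧ C.groups = g₁ ++ Γ :: g₂

/-- ∨-introduction: merge two adjacent oformulas F, G into F ∨ G. -/
def OrIntroStep (P C : Cirquent) : Prop :=
  ∃ (l₁ l₂ : List Fml) (F G : Fml),
    P.pool = l₁ ++ F :: G :: l₂ ∧ C.pool = l₁ ++ (Fml.or F G) :: l₂ ∧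
    C.groups = P.groups.map (Finset.image (mergeIdx l₁.length))

/-- The merging of the ogroup list in ∧-introduction: no ogroup contains both `i`
and `i+1`; every ogroup containing `i` is immediately followed by one containing
`i+1` and vice versa; such pairs are merged. -/
inductive AndMerge (i : ℕ) : List (Finset ℕ) → List (Finset ℕ) → Prop where
  | nil : AndMerge i [] []
  | skip {Γ : Finset ℕ} {l l' : List (Finset ℕ)} :
      i ∉ Γ → (i + 1) ∉ Γ → AndMerge i l l' → AndMerge i (Γ :: l) (Γ :: l')
  | merge {Γ Δ : Finset ℕ} {l l' : List (Finset ℕ)} :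
      i ∈ Γ → (i + 1) ∉ Γ → (i + 1) ∈ Δ → i ∉ Δ →
      AndMerge i l l' → AndMerge i (Γ :: Δ :: l) ((Γ ∪ Δ) :: l')

/-- ∧-introduction. -/
def AndIntroStep (P C : Cirquent) : Prop :=
  ∃ (l₁ l₂ : List Fml) (F G : Fml) (merged : List (Finset ℕ)),
    P.pool = l₁ ++ F :: G :: l₂ ∧ C.pool = l₁ ++ (Fml.and F G) :: l₂ ∧
    AndMerge l₁.length P.groups merged ∧
    C.groups = merged.map (Finset.image (mergeIdx l₁.length))

inductive RuleName where
  | emptyAx | idAx | mix | ofExch | ogExch | poolWeak | ogWeak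
  | dupDown | dupUp | orIntro | andIntro
deriving DecidableEq

/-- The unary (one-premise) rules, by name. -/
def unRel : RuleName → Cirquent → Cirquent → Prop
  | .ofExch => OfExchStep
  | .ogExch => OgExchStep
  | .poolWeak => PoolWeakStep
  | .ogWeak => OgWeakStep
  | .dupDown => DupDownStep
  | .dupUp => DupUpStep
  | .orIntro => OrIntroStep
  | .andIntro => AndIntroStep
  | _ => fun _ _ => False

/-- Proof trees: each node is labeled by its cirquent and the rule used. -/
inductive PTree where
  | leaf (C : Cirquent) (r : RuleName)
  | un (C : Cirquent) (r : RuleName) (p : PTree)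
  | bin (C : Cirquent) (r : RuleName) (p q : PTree)

namespace PTree

def concl : PTree → Cirquent
  | leaf C _ => C
  | un C _ _ => C
  | bin C _ _ _ => C

/-- Validity: each node follows from its children by the named rule. -/
def Valid : PTree → Prop
  | leaf C r =>
      (r = .emptyAx ∧ C = emptyCirquent) ∨ (r = .idAx ∧ ∃ F, C = idCirquent F)
  | un C r p => p.Valid ∧ unRel r p.concl C
  | bin C r p q => p.Valid ∧ q.Valid ∧ r = .mix ∧ MixStep p.concl q.concl C

/-- Number of applications of rule `r` in the proof. -/
def count (r : RuleName) : PTree → ℕ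
  | leaf _ r' => if r' = r then 1 else 0
  | un _ r' p => (if r' = r then 1 else 0) + p.count r
  | bin _ r' p q => (if r' = r then 1 else 0) + p.count r + q.count r

/-- The cirquents occurring in the proof. -/
def cirquents : PTree → List Cirquent
  | leaf C _ => [C]
  | un C _ p => C :: p.cirquents
  | bin C _ p q => C :: (p.cirquents ++ q.cirquents)

/-- Total number of rule applications (nodes). -/
def nodes : PTree → ℕ
  | leaf _ _ => 1
  | un _ _ p => p.nodes + 1
  | bin _ _ p q => p.nodes + q.nodes + 1

/-- Number of leaves of the proof tree. -/
def leavesCount : PTree → ℕ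
  | leaf _ _ => 1
  | un _ _ p => p.leavesCount
  | bin _ _ p q => p.leavesCount + q.leavesCount

end PTree

/-- A proof uses no duplication. -/
def DupFree (p : PTree) : Prop :=
  p.count RuleName.dupDown = 0 ∧ p.count RuleName.dupUp = 0

/-- Provability of a cirquent in CL5. -/
def ProvesC (C : Cirquent) : Prop := ∃ p : PTree, p.Valid ∧ p.concl = C

/-- Provability of a formula in CL5. -/
def ProvesCL5 (F : Fml) : Prop := ∃ p : PTree, p.Valid ∧ p.concl = fmlCirquent F

/-- Provability of a formula in CL5⁻ (CL5 without duplication). -/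
def ProvesCL5m (F : Fml) : Prop :=
  ∃ p : PTree, p.Valid ∧ DupFree p ∧ p.concl = fmlCirquent F

/-- Number of arcs of a cirquent (sum of the sizes of its ogroups). -/
def Cirquent.arcs (C : Cirquent) : ℕ := (C.groups.map Finset.card).sum

/-- Size of a cirquent: sum of the lengths of the oformulas in its pool plus
the sum of the sizes of its ogroups. -/
def Cirquent.size (C : Cirquent) : ℕ := (C.pool.map Fml.len).sum + C.arcs

/-- Size of a proof: the sum of the sizes of the cirquents it contains. -/
def PTree.size (p : PTree) : ℕ := (p.cirquents.map Cirquent.size).sum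

/-- Total number of positive occurrences of atoms in the pool. -/
def Cirquent.poolPosOcc (C : Cirquent) : ℕ := (C.pool.map Fml.posOcc).sum

end CirquentCalc

namespace CirquentCalc

/-! The TQBF-Σ₂ reduction. A literal is a pair (atom, polarity); a quantifier-free
Boolean formula in disjunctive normal form is a list of conjunctions of literals. -/

abbrev Lit := ℕ × Bool
abbrev DNF := List (List Lit)

def evalLit (b : ℕ → Bool) (l : Lit) : Bool := if l.2 then b l.1 else !(b l.1)

def evalDNF (b : ℕ → Bool) (Θ : DNF) : Bool := Θ.any fun c => c.all (evalLit b)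

/-- ∃X∀Y Θ is true: some assignment to X makes Θ true under every extension. -/
def QBFTrue (X : Finset ℕ) (Θ : DNF) : Prop :=
  ∃ a : ℕ → Bool, ∀ b : ℕ → Bool, (∀ x ∈ X, b x = a x) → evalDNF b Θ = true

/-- Injective code for the fresh atoms used in f(φ). -/
def code (t z i j : ℕ) : ℕ := Nat.pair t (Nat.pair z (Nat.pair i j))

/-- The fresh atom Z^z. -/
def Zc (z : ℕ) : ℕ := code 0 z 0 0
/-- The fresh atom uᵢ^z. -/
def uc (z i : ℕ) : ℕ := code 1 z i 0
/-- The fresh atom vⱼ^z. -/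
def vc (z j : ℕ) : ℕ := code 2 z j 0
/-- The fresh atom P_{i,j}^y. -/
def Pc (y i j : ℕ) : ℕ := code 3 y i j
/-- A spare fresh atom (for degenerate empty disjunctions/conjunctions). -/
def dAtom : ℕ := code 4 0 0 0

/-- ⊥ as an abbreviation (used only in degenerate cases). -/
def botQ : Fml := Fml.and (Fml.pos dAtom) (Fml.neg dAtom)
/-- ⊤ as an abbreviation (used only in degenerate cases). -/
def topQ : Fml := Fml.or (Fml.pos dAtom) (Fml.neg dAtom)

/-- Disjunction of a list of formulas. -/
def bigOrQ (d : Fml) : List Fml → Fml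
  | [] => d
  | [a] => a
  | a :: b :: r => Fml.or a (bigOrQ d (b :: r))

/-- Conjunction of a list of formulas. -/
def bigAndQ (d : Fml) : List Fml → Fml
  | [] => d
  | [a] => a
  | a :: b :: r => Fml.and a (bigAndQ d (b :: r))

/-- Number of occurrences of the literal (z, s) in a list of literals. -/
def cnt (L : List Lit) (z : ℕ) (s : Bool) : ℕ := (L.filter fun l => l == (z, s)).length

/-- g(z) := Z^z ∧ (Z^z → u₁^z ∧ ⋯ ∧ u_{k^z}^z) ∧ (Z^z → ¬v₁^z ∧ ⋯ ∧ ¬v_{t^z}^z),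
a conjunct being omitted when k^z resp. t^z is 0; A → B is ¬A ∨ B. -/
def gz (flat : List Lit) (z : ℕ) : Fml :=
  let k := cnt flat z true
  let t := cnt flat z false
  let c1 : List Fml :=
    if k = 0 then [] else
      [Fml.or (Fml.neg (Zc z))
        (bigAndQ topQ ((List.range k).map fun i => Fml.pos (uc z (i + 1))))]
  let c2 : List Fml :=
    if t = 0 then [] else
      [Fml.or (Fml.neg (Zc z))
        (bigAndQ topQ ((List.range t).map fun j => Fml.neg (vc z (j + 1))))]
  bigAndQ topQ (Fml.pos (Zc z) :: (c1 ++ c2))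

/-- The index of the occurrence (1-based, counted among occurrences of the same
literal) of the literal at global position `w` of the flattened DNF. -/
def occIdx (flat : List Lit) (w : ℕ) (l : Lit) : ℕ := cnt (flat.take w) l.1 l.2 + 1

/-- Replacement of the literal `l` occurring at global position `w`:
an occurrence of z ∈ X becomes the corresponding uᵢ^z (resp. ¬vⱼ^z); an
occurrence of y ∉ X becomes the corresponding disjunction of P-literals. -/
def repl (X : Finset ℕ) (flat : List Lit) (w : ℕ) (l : Lit) : Fml :=
  let i := occIdx flat w l
  if l.1 ∈ X then
    if l.2 then Fml.pos (uc l.1 i) else Fml.neg (vc l.1 i)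
  else
    if l.2 then
      bigOrQ botQ ((List.range (cnt flat l.1 false)).map fun j =>
        Fml.pos (Pc l.1 i (j + 1)))
    else
      bigOrQ botQ ((List.range (cnt flat l.1 true)).map fun i' =>
        Fml.neg (Pc l.1 (i' + 1) i))

/-- Pair each literal of a conjunction with its global position, starting at `w`. -/
def idxConj : ℕ → List Lit → List (ℕ × Lit)
  | _, [] => []
  | w, a :: r => (w, a) :: idxConj (w + 1) r

/-- Pair each literal of a DNF with its global position. -/
def idxDNF : ℕ → DNF → List (List (ℕ × Lit))
  | _, [] => []
  | w, c :: r => idxConj w c :: idxDNF (w + c.length) r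

/-- The consequent of f(φ): Θ with each literal occurrence replaced. -/
def consequentQ (X : Finset ℕ) (Θ : DNF) : Fml :=
  let flat := Θ.flatten
  bigOrQ botQ ((idxDNF 0 Θ).map fun c =>
    bigAndQ topQ (c.map fun p => repl X flat p.1 p.2))

/-- f(φ) := (g(z₁) ∧ ⋯ ∧ g(z_l)) → Σ, where → is ¬A ∨ B with negation pushed
to atoms (when X is empty the antecedent is absent). -/
def fQBF (X : Finset ℕ) (Θ : DNF) : Fml :=
  match (X.sort (· ≤ ·)).map (gz Θ.flatten) with
  | [] => consequentQ X Θ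
  | g :: gs => Fml.or (Fml.negate (bigAndQ topQ (g :: gs))) (consequentQ X Θ)

end CirquentCalc

/-!
Fix an assignment `a` to `X` witnessing `φ`. Then `f(φ)` is a substitution instance of a formula
`fBin` in which every atom occurs at most once positively and at most once negatively. In `f(φ)`
only two things break this: `Z^z` occurs three times when both implications of `g(z)` are
present, and the atom of `⊥` recurs in the empty disjunctions that replace literals of universal
variables with no complementary occurrence. In `fBin` the implication of `g(z)` that `a` does not
need becomes a fresh atom, and each such empty disjunction a fresh atom `P^y_{i,0}` resp.
`¬P^y_{0,j}`; the substitution maps them back.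

`fBin` is a tautology. If `v` satisfies the antecedent, the implications kept by `a` make the
replacements of all `X`-literals true under `a` true under `v`. Extend `a` by making `y` true iff
all replacements of positive occurrences of `y` are true under `v`; some conjunct of `Θ` is true
under this extension, and all its replacements are true under `v`: for a negative occurrence `j`
of a false `y`, some positive occurrence `i` has all `P^y_{i,*}` false, so `¬P^y_{i,j}` holds.

An empty conjunct makes `⊤` a disjunct of `f(φ)`; a disjunction with a disjunct that is an
instance of a binary tautology is itself one.
-/

lemma List.nodup_flatMap_of_mem_inj {α β : Type*} {l : List α} {f : α → List β} (hl : l.Nodup)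
    (hf : ∀ x ∈ l, (f x).Nodup) (hinj : ∀ x ∈ l, ∀ y ∈ l, ∀ m ∈ f x, m ∈ f y → x = y) :
    (l.flatMap f).Nodup :=
  List.nodup_flatMap.2 ⟨hf, (List.nodup_iff_pairwise_ne.1 hl).imp_of_mem
    fun hx hy hne m hmx hmy => hne (hinj _ hx _ hy m hmx hmy)⟩

lemma List.flatMap_fun_nil {α β : Type*} (l : List α) : l.flatMap (fun _ => ([] : List β)) = [] :=
  List.flatMap_eq_nil_iff.2 fun _ _ => rfl

namespace CirquentCalc

namespace Fml

@[simp] lemma negate_negate : ∀ F : Fml, F.negate.negate = F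
  | pos _ | neg _ => rfl
  | and f g | or f g => by simp [negate, negate_negate f, negate_negate g]

lemma eval_negate (v : ℕ → Bool) : ∀ F : Fml, F.negate.eval v = !F.eval v
  | pos _ | neg _ => by simp [negate, eval]
  | and f g | or f g => by simp [negate, eval, eval_negate v f, eval_negate v g]

lemma subst_negate (σ : ℕ → Fml) : ∀ F : Fml, F.negate.subst σ = (F.subst σ).negate
  | pos _ | neg _ => by simp [negate, subst]
  | and f g | or f g => by simp [negate, subst, subst_negate σ f, subst_negate σ g]

lemma subst_pos : ∀ F : Fml, F.subst pos = F
  | pos _ | neg _ => rfl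
  | and f g | or f g => by simp [subst, subst_pos f, subst_pos g]

def polarAtoms (s : Bool) : Fml → List ℕ
  | pos n => if s then [n] else []
  | neg n => if s then [] else [n]
  | and f g | or f g => f.polarAtoms s ++ g.polarAtoms s

lemma cPos_eq_count (a : ℕ) : ∀ F : Fml, F.cPos a = (F.polarAtoms true).count a
  | pos n | neg n => by simp [cPos, polarAtoms, List.count_cons]
  | and f g | or f g => by simp [cPos, polarAtoms, cPos_eq_count a f, cPos_eq_count a g]

lemma cNeg_eq_count (a : ℕ) : ∀ F : Fml, F.cNeg a = (F.polarAtoms false).count a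
  | pos n | neg n => by simp [cNeg, polarAtoms, List.count_cons]
  | and f g | or f g => by simp [cNeg, polarAtoms, cNeg_eq_count a f, cNeg_eq_count a g]

@[simp] lemma polarAtoms_negate (s : Bool) : ∀ F : Fml, F.negate.polarAtoms s = F.polarAtoms !s
  | pos _ | neg _ => by cases s <;> rfl
  | and f g | or f g => by simp [negate, polarAtoms, polarAtoms_negate s f, polarAtoms_negate s g]

lemma subst_congr {σ τ : ℕ → Fml} :
    ∀ F : Fml, (∀ s, ∀ n ∈ F.polarAtoms s, σ n = τ n) → F.subst σ = F.subst τ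
  | pos n, h => by simpa [subst, polarAtoms] using h true
  | neg n, h => by simp [subst, polarAtoms, h false n]
  | and f g, h | or f g, h => by
      simp only [polarAtoms, List.mem_append] at h
      simp [subst, subst_congr f fun s n hn => h s n (.inl hn),
        subst_congr g fun s n hn => h s n (.inr hn)]

end Fml

open Fml

lemma normal_iff_nodup {F : Fml} : Normal F ↔ ∀ s, (F.polarAtoms s).Nodup := by
  simp only [Normal, Bool.forall_bool, List.nodup_iff_count_le_one, cPos_eq_count,
    cNeg_eq_count]
  exact ⟨fun h => ⟨fun a => (h a).2, fun a => (h a).1⟩, fun h a => ⟨h.2 a, h.1 a⟩⟩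

lemma Normal.binary {F : Fml} (h : Normal F) : Binary F := fun a => by
  have := h a
  omega

section BigConnectives

variable (d : Fml)

lemma subst_bigAndQ (σ : ℕ → Fml) :
    ∀ L : List Fml, (bigAndQ d L).subst σ = bigAndQ (d.subst σ) (L.map (subst σ))
  | [] | [_] => rfl
  | _ :: b :: r => by simp [bigAndQ, subst, subst_bigAndQ σ (b :: r)]

lemma subst_bigOrQ (σ : ℕ → Fml) :
    ∀ L : List Fml, (bigOrQ d L).subst σ = bigOrQ (d.subst σ) (L.map (subst σ))
  | [] | [_] => rfl
  | _ :: b :: r => by simp [bigOrQ, subst, subst_bigOrQ σ (b :: r)]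

variable {d}

lemma polarAtoms_bigAndQ (s : Bool) : ∀ L : List Fml,
    (bigAndQ d L).polarAtoms s = if L = [] then d.polarAtoms s else L.flatMap (polarAtoms s)
  | [] | [_] => by simp [bigAndQ]
  | _ :: b :: r => by simp [bigAndQ, polarAtoms, polarAtoms_bigAndQ s (b :: r)]

lemma polarAtoms_bigOrQ (s : Bool) : ∀ L : List Fml,
    (bigOrQ d L).polarAtoms s = if L = [] then d.polarAtoms s else L.flatMap (polarAtoms s)
  | [] | [_] => by simp [bigOrQ]
  | _ :: b :: r => by simp [bigOrQ, polarAtoms, polarAtoms_bigOrQ s (b :: r)]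

lemma eval_bigAndQ (v : ℕ → Bool) :
    ∀ {L : List Fml}, L ≠ [] → ((bigAndQ d L).eval v = true ↔ ∀ A ∈ L, A.eval v = true)
  | [_], _ => by simp [bigAndQ]
  | _ :: b :: r, _ => by simp [bigAndQ, eval, eval_bigAndQ v (L := b :: r)]

lemma eval_bigOrQ (v : ℕ → Bool) :
    ∀ {L : List Fml}, L ≠ [] → ((bigOrQ d L).eval v = true ↔ ∃ A ∈ L, A.eval v = true)
  | [_], _ => by simp [bigOrQ]
  | _ :: b :: r, _ => by simp [bigOrQ, eval, eval_bigOrQ v (L := b :: r)]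

end BigConnectives

def BinaryTautologyInstance (F : Fml) : Prop :=
  ∃ B : Fml, Binary B ∧ Tautology B ∧ InstanceOf F B

lemma exists_fresh_atom (B : Fml) : ∃ q, ∀ s, q ∉ B.polarAtoms s := by
  refine ⟨(B.polarAtoms true ++ B.polarAtoms false).sum + 1, fun s hq => ?_⟩
  have := List.le_sum_of_mem (List.mem_append.2 (by cases s; exacts [.inr hq, .inl hq]))
  omega

section FreshAtom

variable {B : Fml} {q : ℕ}

lemma Binary.or_pos_fresh (hB : Binary B) (hq : ∀ s, q ∉ B.polarAtoms s) :
    Binary (.or (.pos q) B) := fun m => by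
  by_cases hm : q = m
  · subst hm
    simp [cPos, cNeg, cPos_eq_count, cNeg_eq_count, List.count_eq_zero_of_not_mem, hq]
  · simpa [cPos, cNeg, hm] using hB m

lemma subst_update_fresh (hq : ∀ s, q ∉ B.polarAtoms s) (σ : ℕ → Fml) (G : Fml) :
    B.subst (Function.update σ q G) = B.subst σ :=
  subst_congr B fun s n hn => Function.update_of_ne (fun h => hq s (by rwa [h] at hn)) _ _

end FreshAtom

namespace BinaryTautologyInstance

variable {F : Fml}

/-- The other disjunct is the image of an atom that does not occur in the binary tautology. -/
lemma or_of_right (hF : BinaryTautologyInstance F) (G : Fml) :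
    BinaryTautologyInstance (.or G F) := by
  obtain ⟨B, hB, hBt, σ, rfl⟩ := hF
  obtain ⟨q, hq⟩ := exists_fresh_atom B
  exact ⟨.or (.pos q) B, hB.or_pos_fresh hq, fun v => by simp [eval, hBt v],
    Function.update σ q G, by simp [subst, subst_update_fresh hq]⟩

lemma or_of_left (hF : BinaryTautologyInstance F) (G : Fml) :
    BinaryTautologyInstance (.or F G) := by
  obtain ⟨B, hB, hBt, σ, rfl⟩ := hF
  obtain ⟨q, hq⟩ := exists_fresh_atom B
  refine ⟨.or B (.pos q), fun m => ?_, fun v => by simp [eval, hBt v],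
    Function.update σ q G, by simp [subst, subst_update_fresh hq]⟩
  have := hB.or_pos_fresh hq m
  simp only [cPos, cNeg] at this ⊢
  omega

end BinaryTautologyInstance

lemma binaryTautologyInstance_topQ : BinaryTautologyInstance topQ :=
  ⟨topQ, fun m => by simp only [topQ, cPos, cNeg]; split <;> omega,
    fun v => by simp [topQ, eval], pos, subst_pos _⟩

lemma binaryTautologyInstance_bigOrQ (d : Fml) : ∀ {L : List Fml},
    (∃ A ∈ L, BinaryTautologyInstance A) → BinaryTautologyInstance (bigOrQ d L)
  | [_], h => by simpa [bigOrQ] using h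
  | _ :: b :: r, ⟨A, hA, h⟩ => by
      rcases List.mem_cons.1 hA with rfl | hA
      · exact h.or_of_left _
      · exact (binaryTautologyInstance_bigOrQ d ⟨A, hA, h⟩).or_of_right _

lemma cnt_append (L₁ L₂ : List Lit) (z : ℕ) (s : Bool) :
    cnt (L₁ ++ L₂) z s = cnt L₁ z s + cnt L₂ z s := by
  simp [cnt, List.filter_append]

lemma cnt_take_succ {flat : List Lit} {w : ℕ} {l : Lit} (h : flat[w]? = some l) :
    cnt (flat.take (w + 1)) l.1 l.2 = cnt (flat.take w) l.1 l.2 + 1 := by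
  rw [List.take_add_one, h, cnt_append]
  simp [cnt]

lemma cnt_take_lt {flat : List Lit} {w : ℕ} {l : Lit} (h : flat[w]? = some l) :
    cnt (flat.take w) l.1 l.2 < cnt flat l.1 l.2 := by
  have := cnt_append (flat.take (w + 1)) (flat.drop (w + 1)) l.1 l.2
  rw [List.take_append_drop, cnt_take_succ h] at this
  omega

lemma cnt_take_mono (flat : List Lit) (z : ℕ) (s : Bool) {w w' : ℕ} (h : w ≤ w') :
    cnt (flat.take w) z s ≤ cnt (flat.take w') z s := by
  obtain ⟨k, rfl⟩ := Nat.exists_eq_add_of_le h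
  rw [List.take_add, cnt_append]
  omega

lemma occIdx_injective {flat : List Lit} {w w' : ℕ} {l : Lit} (h : flat[w]? = some l)
    (h' : flat[w']? = some l) (he : occIdx flat w l = occIdx flat w' l) : w = w' := by
  simp only [occIdx, Nat.add_right_cancel_iff] at he
  by_contra hne
  rcases Nat.lt_or_gt_of_ne hne with hlt | hlt
  · have := cnt_take_mono flat l.1 l.2 hlt
    rw [cnt_take_succ h] at this
    omega
  · have := cnt_take_mono flat l.1 l.2 hlt
    rw [cnt_take_succ h'] at this
    omega

lemma mem_idxConj_iff {p : ℕ × Lit} : ∀ {w : ℕ} {L : List Lit},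
    p ∈ idxConj w L ↔ w ≤ p.1 ∧ L[p.1 - w]? = some p.2
  | _, [] => by simp [idxConj]
  | w, a :: r => by
      rw [idxConj, List.mem_cons, mem_idxConj_iff]
      rcases p with ⟨k, l⟩
      rcases Nat.lt_trichotomy k w with hk | rfl | hk
      · simp [Prod.ext_iff, hk.ne, Nat.not_le.2 hk, Nat.not_le.2 (Nat.lt_succ_of_lt hk)]
      · simp [Prod.ext_iff, eq_comm]
      · obtain ⟨j, rfl⟩ := Nat.exists_eq_add_of_lt hk
        simp [Prod.ext_iff, show w + j + 1 - w = j + 1 by omega,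
          show w + j + 1 - (w + 1) = j by omega, hk.le, hk.ne']

lemma getElem?_of_mem_idxConj {p : ℕ × Lit} {L : List Lit} (h : p ∈ idxConj 0 L) :
    L[p.1]? = some p.2 := by
  simpa using (mem_idxConj_iff.1 h).2

lemma nodup_idxConj (w : ℕ) (L : List Lit) : (idxConj w L).Nodup := by
  induction L generalizing w with
  | nil => simp [idxConj]
  | cons a r ih =>
      refine List.nodup_cons.2 ⟨fun h => ?_, ih (w + 1)⟩
      simpa using (mem_idxConj_iff.1 h).1

lemma idxConj_append (w : ℕ) (L₁ L₂ : List Lit) :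
    idxConj w (L₁ ++ L₂) = idxConj w L₁ ++ idxConj (w + L₁.length) L₂ := by
  induction L₁ generalizing w with
  | nil => simp [idxConj]
  | cons a r ih => simp [idxConj, ih, Nat.add_assoc, Nat.add_comm 1]

lemma map_snd_idxConj (w : ℕ) (L : List Lit) : (idxConj w L).map Prod.snd = L := by
  induction L generalizing w with
  | nil => rfl
  | cons a r ih => simp [idxConj, ih]

lemma flatten_idxDNF : ∀ (w : ℕ) (Θ : DNF), (idxDNF w Θ).flatten = idxConj w Θ.flatten
  | _, [] => rfl
  | w, c :: r => by simp [idxDNF, flatten_idxDNF _ r, idxConj_append]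

lemma map_idxDNF : ∀ (w : ℕ) (Θ : DNF), (idxDNF w Θ).map (List.map Prod.snd) = Θ
  | _, [] => rfl
  | w, c :: r => by simp [idxDNF, map_idxDNF _ r, map_snd_idxConj]

lemma binaryTautologyInstance_fQBF_of_nil_mem {X : Finset ℕ} {Θ : DNF} (h : [] ∈ Θ) :
    BinaryTautologyInstance (fQBF X Θ) := by
  rw [← map_idxDNF 0 Θ] at h
  obtain ⟨c, hc, hc0⟩ := List.mem_map.1 h
  rw [List.map_eq_nil_iff] at hc0
  subst hc0
  have hcons : BinaryTautologyInstance (consequentQ X Θ) :=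
    binaryTautologyInstance_bigOrQ _ ⟨topQ, List.mem_map.2 ⟨[], hc, rfl⟩,
      binaryTautologyInstance_topQ⟩
  unfold fQBF
  split
  exacts [hcons, hcons.or_of_right _]

@[simp] lemma code_eq_code_iff {t z i j t' z' i' j' : ℕ} :
    code t z i j = code t' z' i' j' ↔ t = t' ∧ z = z' ∧ i = i' ∧ j = j' := by
  simp [code]

/-- The atom that stands in for whichever of the two implications of `g(z)` the witnessing
assignment does not need, so that `Z^z` occurs only twice. -/
def impAtom (z : ℕ) : ℕ := code 5 z 0 0

section Binarization

variable (a : ℕ → Bool) (X : Finset ℕ) (Θ : DNF) (flat : List Lit)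

def uImp (z : ℕ) : Fml :=
  .or (.neg (Zc z))
    (bigAndQ topQ ((List.range (cnt flat z true)).map fun i => .pos (uc z (i + 1))))

def vImp (z : ℕ) : Fml :=
  .or (.neg (Zc z))
    (bigAndQ topQ ((List.range (cnt flat z false)).map fun j => .neg (vc z (j + 1))))

def gBin (z : ℕ) : Fml :=
  bigAndQ topQ (.pos (Zc z) ::
    ((if cnt flat z true = 0 then [] else [if a z then uImp flat z else .pos (impAtom z)]) ++
     (if cnt flat z false = 0 then [] else [if a z then .pos (impAtom z) else vImp flat z])))

/-- `repl` with the empty disjunctions `⊥` replaced by `P^y_{i,0}` and `¬P^y_{0,j}`, atoms that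
`f(φ)` does not use since its indices start at `1`. -/
def replBin (w : ℕ) (l : Lit) : Fml :=
  let i := occIdx flat w l
  if l.1 ∈ X then
    if l.2 then .pos (uc l.1 i) else .neg (vc l.1 i)
  else if l.2 then
    bigOrQ (.pos (Pc l.1 i 0)) ((List.range (cnt flat l.1 false)).map fun j =>
      .pos (Pc l.1 i (j + 1)))
  else
    bigOrQ (.neg (Pc l.1 0 i)) ((List.range (cnt flat l.1 true)).map fun i' =>
      .neg (Pc l.1 (i' + 1) i))

def consequentBin : Fml :=
  bigOrQ botQ ((idxDNF 0 Θ).map fun c =>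
    bigAndQ topQ (c.map fun p => replBin X Θ.flatten p.1 p.2))

def fBin : Fml :=
  match (X.sort (· ≤ ·)).map (gBin a Θ.flatten) with
  | [] => consequentBin X Θ
  | g :: gs => .or (bigAndQ topQ (g :: gs)).negate (consequentBin X Θ)

/-- Decoding `m = code t z i j`: sends `impAtom z` to the implication it replaces, `P^y_{i,0}` to
`⊥` and `P^y_{0,j}` to `¬⊥` (it occurs negatively), and fixes every other atom. -/
def substBin (m : ℕ) : Fml :=
  let z := m.unpair.2.unpair.1
  if m.unpair.1 = 5 then (if a z then vImp flat z else uImp flat z)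
  else if m.unpair.1 = 3 ∧ m.unpair.2.unpair.2.unpair.2 = 0 then botQ
  else if m.unpair.1 = 3 ∧ m.unpair.2.unpair.2.unpair.1 = 0 then botQ.negate
  else .pos m

end Binarization

section Substitution

variable {a : ℕ → Bool} {flat : List Lit}

@[simp] lemma substBin_Zc (z : ℕ) : substBin a flat (Zc z) = .pos (Zc z) := by
  simp [substBin, Zc, code]

@[simp] lemma substBin_uc (z i : ℕ) : substBin a flat (uc z i) = .pos (uc z i) := by
  simp [substBin, uc, code]

@[simp] lemma substBin_vc (z j : ℕ) : substBin a flat (vc z j) = .pos (vc z j) := by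
  simp [substBin, vc, code]

@[simp] lemma substBin_impAtom (z : ℕ) :
    substBin a flat (impAtom z) = if a z then vImp flat z else uImp flat z := by
  simp [substBin, impAtom, code]

@[simp] lemma substBin_Pc_right_zero (y i : ℕ) : substBin a flat (Pc y i 0) = botQ := by
  simp [substBin, Pc, code]

lemma substBin_Pc_left_zero (y : ℕ) {j : ℕ} (hj : j ≠ 0) :
    substBin a flat (Pc y 0 j) = botQ.negate := by
  simp [substBin, Pc, code, hj]

lemma substBin_Pc (y : ℕ) {i j : ℕ} (hi : i ≠ 0) (hj : j ≠ 0) :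
    substBin a flat (Pc y i j) = .pos (Pc y i j) := by
  simp [substBin, Pc, code, hi, hj]

@[simp] lemma subst_topQ : topQ.subst (substBin a flat) = topQ := by
  simp [topQ, subst, substBin, dAtom, code, negate]

@[simp] lemma subst_botQ : botQ.subst (substBin a flat) = botQ := by
  simp [botQ, subst, substBin, dAtom, code, negate]

@[simp] lemma subst_uImp (z : ℕ) : (uImp flat z).subst (substBin a flat) = uImp flat z := by
  simp [uImp, subst, subst_bigAndQ, negate, Function.comp_def]

@[simp] lemma subst_vImp (z : ℕ) : (vImp flat z).subst (substBin a flat) = vImp flat z := by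
  simp [vImp, subst, subst_bigAndQ, negate, Function.comp_def]

lemma gz_eq (z : ℕ) : gz flat z = bigAndQ topQ (.pos (Zc z) ::
    ((if cnt flat z true = 0 then [] else [uImp flat z]) ++
     (if cnt flat z false = 0 then [] else [vImp flat z]))) := rfl

lemma subst_gBin (z : ℕ) : (gBin a flat z).subst (substBin a flat) = gz flat z := by
  rw [gz_eq]
  by_cases hk : cnt flat z true = 0 <;> by_cases ht : cnt flat z false = 0 <;>
    cases haz : a z <;> simp [gBin, subst_bigAndQ, hk, ht, haz, subst]

lemma subst_replBin (X : Finset ℕ) (w : ℕ) (l : Lit) :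
    (replBin X flat w l).subst (substBin a flat) = repl X flat w l := by
  have hi : occIdx flat w l ≠ 0 := Nat.succ_ne_zero _
  by_cases hX : l.1 ∈ X <;> cases hs : l.2 <;>
    simp [replBin, repl, hX, hs, subst, subst_bigOrQ, substBin_Pc_left_zero, substBin_Pc, hi,
      negate, Function.comp_def]

lemma subst_consequentBin (X : Finset ℕ) (Θ : DNF) :
    (consequentBin X Θ).subst (substBin a Θ.flatten) = consequentQ X Θ := by
  simp [consequentBin, consequentQ, subst_bigOrQ, subst_bigAndQ, subst_replBin, Function.comp_def]

lemma subst_fBin (X : Finset ℕ) (Θ : DNF) :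
    (fBin a X Θ).subst (substBin a Θ.flatten) = fQBF X Θ := by
  unfold fBin fQBF
  rcases X.sort (· ≤ ·) with _ | ⟨z, zs⟩
  · exact subst_consequentBin X Θ
  · simp [subst, subst_negate, subst_bigAndQ, subst_gBin, subst_consequentBin, Function.comp_def]

end Substitution

section Normality

variable {a : ℕ → Bool} {X : Finset ℕ} {flat : List Lit} {s : Bool} {m : ℕ}

/-- `code (litTag s) z i 0` is `uc z i` for `s = true` and `vc z i` for `s = false`. -/
def litTag (s : Bool) : ℕ := if s then 1 else 2

lemma polarAtoms_uImp (z : ℕ) (hk : cnt flat z true ≠ 0) : (uImp flat z).polarAtoms s =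
    if s then (List.range (cnt flat z true)).map (fun i => uc z (i + 1)) else [Zc z] := by
  cases s <;> simp [uImp, polarAtoms, polarAtoms_bigAndQ, hk, List.flatMap_map,
    ← List.map_eq_flatMap]

lemma polarAtoms_vImp (z : ℕ) (ht : cnt flat z false ≠ 0) : (vImp flat z).polarAtoms s =
    if s then [] else Zc z :: (List.range (cnt flat z false)).map (fun j => vc z (j + 1)) := by
  cases s <;> simp [vImp, polarAtoms, polarAtoms_bigAndQ, ht, List.flatMap_map,
    ← List.map_eq_flatMap]

lemma mem_polarAtoms_gBin {z : ℕ} (h : m ∈ (gBin a flat z).polarAtoms s) :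
    ∃ t i, m = code t z i 0 ∧ (t = 0 ∨ t = 5 ∨ t = litTag s) := by
  by_cases hk : cnt flat z true = 0 <;> by_cases ht : cnt flat z false = 0 <;>
    cases haz : a z <;> cases s <;>
    simp [gBin, polarAtoms, polarAtoms_bigAndQ, polarAtoms_uImp, polarAtoms_vImp, hk, ht, haz]
      at h <;> aesop (add norm simp [Zc, impAtom, uc, vc, litTag])

lemma nodup_polarAtoms_gBin (z : ℕ) : ((gBin a flat z).polarAtoms s).Nodup := by
  by_cases hk : cnt flat z true = 0 <;> by_cases ht : cnt flat z false = 0 <;>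
    cases haz : a z <;> cases s <;>
    simp [gBin, polarAtoms, polarAtoms_bigAndQ, polarAtoms_uImp, polarAtoms_vImp, hk, ht, haz,
      Zc, impAtom, uc, vc, List.nodup_append, List.nodup_map_iff_inj_on List.nodup_range]

variable {w : ℕ} {l : Lit}

lemma mem_polarAtoms_replBin (h : m ∈ (replBin X flat w l).polarAtoms s) :
    l.2 = s ∧ (m = code (litTag s) l.1 (occIdx flat w l) 0 ∨
      ∃ k, m = if s then Pc l.1 (occIdx flat w l) k else Pc l.1 k (occIdx flat w l)) := by
  rcases l with ⟨y, _ | _⟩ <;> by_cases hX : y ∈ X <;> cases s <;>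
    simp [replBin, polarAtoms, polarAtoms_bigOrQ, hX, List.flatMap_map, litTag, uc, vc] at h ⊢ <;>
    (try split_ifs at h) <;> aesop (add norm simp List.mem_flatMap)

lemma nodup_polarAtoms_replBin (X : Finset ℕ) (flat : List Lit) (w : ℕ) (l : Lit) (s : Bool) :
    ((replBin X flat w l).polarAtoms s).Nodup := by
  rcases l with ⟨y, _ | _⟩ <;> by_cases hX : y ∈ X <;> cases s <;>
    simp [replBin, polarAtoms, polarAtoms_bigOrQ, hX, List.flatMap_map, List.flatMap_fun_nil] <;>
    split_ifs <;> simp [← List.map_eq_flatMap, List.nodup_map_iff_inj_on List.nodup_range, Pc]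

lemma eq_of_mem_polarAtoms_replBin {w' : ℕ} {l' : Lit} (hw : flat[w]? = some l)
    (hw' : flat[w']? = some l') (h : m ∈ (replBin X flat w l).polarAtoms s)
    (h' : m ∈ (replBin X flat w' l').polarAtoms s) : w = w' := by
  obtain ⟨hs, hm⟩ := mem_polarAtoms_replBin h
  obtain ⟨hs', hm'⟩ := mem_polarAtoms_replBin h'
  have key : l.1 = l'.1 ∧ occIdx flat w l = occIdx flat w' l' := by
    cases s <;> rcases hm with rfl | ⟨k, rfl⟩ <;> rcases hm' with hm' | ⟨k', hm'⟩ <;>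
      simp [Pc, litTag] at hm' <;> omega
  have hl : l = l' := Prod.ext key.1 (hs.trans hs'.symm)
  subst hl
  exact occIdx_injective hw hw' key.2

lemma polarAtoms_consequentBin (Θ : DNF) (hΘ : Θ ≠ []) (hc : [] ∉ Θ) (s : Bool) :
    (consequentBin X Θ).polarAtoms s =
      (idxConj 0 Θ.flatten).flatMap fun p => (replBin X Θ.flatten p.1 p.2).polarAtoms s := by
  have hne : idxDNF 0 Θ ≠ [] := fun h => hΘ (by rw [← map_idxDNF 0 Θ, h]; rfl)
  have hc' : ∀ c ∈ idxDNF 0 Θ, c ≠ [] := by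
    rintro c hcΘ rfl
    exact hc (map_idxDNF 0 Θ ▸ List.mem_map.2 ⟨[], hcΘ, rfl⟩)
  rw [consequentBin, polarAtoms_bigOrQ, if_neg (by simpa using hne), List.flatMap_map,
    ← flatten_idxDNF, ← (idxDNF 0 Θ).flatMap_id, List.flatMap_assoc]
  refine List.flatMap_congr fun c hcΘ => ?_
  rw [polarAtoms_bigAndQ, if_neg (by simpa using hc' c hcΘ), List.flatMap_map, id]

lemma nodup_polarAtoms_consequentBin (Θ : DNF) (hΘ : Θ ≠ []) (hc : [] ∉ Θ) (s : Bool) :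
    ((consequentBin X Θ).polarAtoms s).Nodup := by
  rw [polarAtoms_consequentBin Θ hΘ hc]
  refine List.nodup_flatMap_of_mem_inj (nodup_idxConj 0 _)
    (fun p _ => nodup_polarAtoms_replBin ..) fun p hp q hq m hm hm' => ?_
  have hp' := getElem?_of_mem_idxConj hp
  have hq' := getElem?_of_mem_idxConj hq
  have hw := eq_of_mem_polarAtoms_replBin hp' hq' hm hm'
  rw [hw, hq', Option.some_inj] at hp'
  exact Prod.ext hw hp'.symm

lemma nodup_flatMap_polarAtoms_gBin (X : Finset ℕ) (s : Bool) :
    ((X.sort (· ≤ ·)).flatMap fun z => (gBin a flat z).polarAtoms s).Nodup := by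
  refine List.nodup_flatMap_of_mem_inj (X.sort_nodup _) (fun z _ => nodup_polarAtoms_gBin z)
    fun z _ z' _ m hm hm' => ?_
  obtain ⟨t, i, rfl, -⟩ := mem_polarAtoms_gBin hm
  obtain ⟨t', i', he, -⟩ := mem_polarAtoms_gBin hm'
  exact (code_eq_code_iff.1 he).2.1

lemma not_mem_polarAtoms_replBin_of_mem_gBin {z : ℕ} (h : m ∈ (gBin a flat z).polarAtoms !s) :
    m ∉ (replBin X flat w l).polarAtoms s := fun h' => by
  obtain ⟨t, i, rfl, ht⟩ := mem_polarAtoms_gBin h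
  obtain ⟨-, hm | ⟨k, hm⟩⟩ := mem_polarAtoms_replBin h' <;>
    cases s <;> simp [Pc, litTag] at hm ht <;> omega

theorem normal_fBin (a : ℕ → Bool) (X : Finset ℕ) (Θ : DNF) (hΘ : Θ ≠ []) (hc : [] ∉ Θ) :
    Normal (fBin a X Θ) := by
  refine normal_iff_nodup.2 fun s => ?_
  unfold fBin
  split
  · exact nodup_polarAtoms_consequentBin Θ hΘ hc s
  · next heq =>
    rw [polarAtoms, polarAtoms_negate, polarAtoms_bigAndQ, if_neg (List.cons_ne_nil _ _), ← heq,
      List.flatMap_map, List.nodup_append]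
    refine ⟨nodup_flatMap_polarAtoms_gBin X _, nodup_polarAtoms_consequentBin Θ hΘ hc s, ?_⟩
    rintro m hm _ hm' rfl
    obtain ⟨z, -, hz⟩ := List.mem_flatMap.1 hm
    rw [polarAtoms_consequentBin Θ hΘ hc] at hm'
    obtain ⟨p, -, hp⟩ := List.mem_flatMap.1 hm'
    exact not_mem_polarAtoms_replBin_of_mem_gBin hz hp

end Normality

section Tautology

variable {a : ℕ → Bool} {X : Finset ℕ} {flat : List Lit} {v : ℕ → Bool} {z w : ℕ} {l : Lit}

lemma occIdx_sub_one_lt (h : flat[w]? = some l) : occIdx flat w l - 1 < cnt flat l.1 l.2 := by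
  simpa [occIdx] using cnt_take_lt h

lemma eval_uImp (z : ℕ) : (uImp flat z).eval v = true ↔
    (v (Zc z) = true → ∀ i < cnt flat z true, v (uc z (i + 1)) = true) := by
  by_cases hk : cnt flat z true = 0
  · simp [uImp, hk, bigAndQ, topQ, eval]
  · have hne : (List.range (cnt flat z true)).map (fun i => Fml.pos (uc z (i + 1))) ≠ [] := by
      simpa using hk
    simp [uImp, eval, eval_bigAndQ v hne, or_iff_not_imp_left]

lemma eval_vImp (z : ℕ) : (vImp flat z).eval v = true ↔
    (v (Zc z) = true → ∀ j < cnt flat z false, v (vc z (j + 1)) = false) := by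
  by_cases ht : cnt flat z false = 0
  · simp [vImp, ht, bigAndQ, topQ, eval]
  · have hne : (List.range (cnt flat z false)).map (fun j => Fml.neg (vc z (j + 1))) ≠ [] := by
      simpa using ht
    simp [vImp, eval, eval_bigAndQ v hne, or_iff_not_imp_left]

lemma eval_imp_of_eval_gBin (hg : (gBin a flat z).eval v = true) :
    v (Zc z) = true ∧ (if a z then uImp flat z else vImp flat z).eval v = true := by
  have hall := (eval_bigAndQ v (List.cons_ne_nil _ _)).1 hg
  refine ⟨by simpa [eval] using hall _ List.mem_cons_self, ?_⟩
  cases haz : a z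
  · by_cases ht : cnt flat z false = 0
    · simp [eval_vImp, ht]
    · exact hall _ (by simp [haz, ht])
  · by_cases hk : cnt flat z true = 0
    · simp [eval_uImp, hk]
    · exact hall _ (by simp [haz, hk])

lemma eval_replBin_of_eval_gBin (hg : (gBin a flat l.1).eval v = true) (hX : l.1 ∈ X)
    (hw : flat[w]? = some l) (hl : evalLit a l = true) :
    (replBin X flat w l).eval v = true := by
  obtain ⟨hZ, himp⟩ := eval_imp_of_eval_gBin hg
  have hi := occIdx_sub_one_lt hw
  rcases l with ⟨z, _ | _⟩ <;> simp only [evalLit] at hl hi <;> simp at hl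
  · rw [hl, if_neg (by simp), eval_vImp] at himp
    simpa [replBin, hX, eval, occIdx] using himp hZ _ hi
  · rw [hl, if_pos rfl, eval_uImp] at himp
    simpa [replBin, hX, eval, occIdx] using himp hZ _ hi

lemma eval_replBin_neg_of_eval_replBin_pos {y w₀ : ℕ} (hy : y ∉ X)
    (hw : flat[w]? = some (y, false)) (hw₀ : flat[w₀]? = some (y, true))
    (h₀ : (replBin X flat w₀ (y, true)).eval v = false) :
    (replBin X flat w (y, false)).eval v = true := by
  have hi := occIdx_sub_one_lt hw₀
  have hj := occIdx_sub_one_lt hw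
  simp only at hi hj
  have hne₀ : (List.range (cnt flat y false)).map
      (fun j => Fml.pos (Pc y (occIdx flat w₀ (y, true)) (j + 1))) ≠ [] := by simpa using by omega
  have hne : (List.range (cnt flat y true)).map
      (fun i => Fml.neg (Pc y (i + 1) (occIdx flat w (y, false)))) ≠ [] := by simpa using by omega
  simp only [replBin, hy, if_false, if_true, Bool.false_eq_true] at h₀ ⊢
  rw [← Bool.not_eq_true, eval_bigOrQ v hne₀] at h₀
  simp only [List.mem_map, List.mem_range, not_exists, not_and, forall_exists_index, and_imp,
    forall_apply_eq_imp_iff₂, eval, Bool.not_eq_true] at h₀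
  rw [eval_bigOrQ v hne]
  refine ⟨_, List.mem_map.2 ⟨_, List.mem_range.2 hi, rfl⟩, ?_⟩
  simpa [eval, occIdx] using h₀ _ hj

open Classical in
variable (a X flat v) in
noncomputable def extendBin (n : ℕ) : Bool :=
  if n ∈ X then a n
  else decide (∀ w, flat[w]? = some (n, true) → (replBin X flat w (n, true)).eval v = true)

lemma eval_replBin_of_not_mem (hX : l.1 ∉ X) (hw : flat[w]? = some l)
    (hl : evalLit (extendBin a X flat v) l = true) : (replBin X flat w l).eval v = true := by
  rcases l with ⟨y, _ | _⟩ <;> simp only at hX <;> simp [evalLit, extendBin, hX] at hl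
  · obtain ⟨w₀, hw₀, h₀⟩ := hl
    exact eval_replBin_neg_of_eval_replBin_pos hX hw hw₀ h₀
  · exact hl w hw

lemma eval_replBin_of_evalLit (hg : ∀ z ∈ X, (gBin a flat z).eval v = true)
    (hw : flat[w]? = some l) (hl : evalLit (extendBin a X flat v) l = true) :
    (replBin X flat w l).eval v = true := by
  by_cases hX : l.1 ∈ X
  · refine eval_replBin_of_eval_gBin (hg _ hX) hX hw ?_
    simpa [evalLit, extendBin, hX] using hl
  · exact eval_replBin_of_not_mem hX hw hl

lemma eval_consequentBin {Θ : DNF} (hc : [] ∉ Θ) (hg : ∀ z ∈ X, (gBin a Θ.flatten z).eval v = true)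
    (hΘ : evalDNF (extendBin a X Θ.flatten v) Θ = true) : (consequentBin X Θ).eval v = true := by
  obtain ⟨c, hcΘ, hcl⟩ : ∃ c ∈ Θ, ∀ l ∈ c, evalLit (extendBin a X Θ.flatten v) l = true := by
    simpa [evalDNF] using hΘ
  rw [← map_idxDNF 0 Θ] at hcΘ
  obtain ⟨c', hc', rfl⟩ := List.mem_map.1 hcΘ
  have hne : c' ≠ [] := by
    rintro rfl
    exact hc (map_idxDNF 0 Θ ▸ hcΘ)
  rw [consequentBin, eval_bigOrQ v (List.ne_nil_of_mem (List.mem_map_of_mem hc'))]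
  refine ⟨_, List.mem_map_of_mem hc', (eval_bigAndQ v (by simpa using hne)).2 ?_⟩
  intro _ hA
  obtain ⟨p, hp, rfl⟩ := List.mem_map.1 hA
  have hp' : Θ.flatten[p.1]? = some p.2 :=
    getElem?_of_mem_idxConj (flatten_idxDNF 0 Θ ▸ List.mem_flatten.2 ⟨c', hc', hp⟩)
  exact eval_replBin_of_evalLit hg hp' (hcl _ (List.mem_map_of_mem hp))

theorem tautology_fBin {Θ : DNF} (hc : [] ∉ Θ)
    (ha : ∀ b : ℕ → Bool, (∀ x ∈ X, b x = a x) → evalDNF b Θ = true) :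
    Tautology (fBin a X Θ) := by
  intro v
  have hcons : (∀ z ∈ X, (gBin a Θ.flatten z).eval v = true) →
      (consequentBin X Θ).eval v = true :=
    fun hg => eval_consequentBin hc hg (ha _ fun x hx => by simp [extendBin, hx])
  have hmem : ∀ z ∈ X, gBin a Θ.flatten z ∈ (X.sort (· ≤ ·)).map (gBin a Θ.flatten) :=
    fun z hz => List.mem_map_of_mem ((X.mem_sort _).2 hz)
  unfold fBin
  split
  · next heq => exact hcons fun z hz => absurd (heq ▸ hmem z hz) List.not_mem_nil
  · next _ g gs heq =>
    by_cases hA : (bigAndQ topQ (g :: gs)).eval v = true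
    · have := hcons fun z hz => (eval_bigAndQ v (List.cons_ne_nil _ _)).1 hA _ (heq ▸ hmem z hz)
      simp [eval, this]
    · simp [eval, eval_negate, hA]

end Tautology

end CirquentCalc

open CirquentCalc

theorem qbf_true_implies_binary_instance_general (X : Finset ℕ) (Θ : DNF)
    (h : QBFTrue X Θ) :
    ∃ B : Fml, Binary B ∧ Tautology B ∧ InstanceOf (fQBF X Θ) B := by
  obtain ⟨a, ha⟩ := h
  by_cases hc : [] ∈ Θ
  · exact binaryTautologyInstance_fQBF_of_nil_mem hc
  have hΘ : Θ ≠ [] := by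
    rintro rfl
    simpa [evalDNF] using ha a fun _ _ => rfl
  exact ⟨fBin a X Θ, (normal_fBin a X Θ hΘ hc).binary, tautology_fBin hc ha, _, subst_fBin X Θ⟩

/-- For φ = ∃X∀Y Θ with Θ quantifier-free in DNF over X ∪ Y, if φ
is true then f(φ) is an instance of a binary tautology. -/
theorem qbf_true_implies_binary_instance (X Y : Finset ℕ) (Θ : DNF)
    (hXY : Disjoint X Y) (hvars : ∀ c ∈ Θ, ∀ l ∈ c, l.1 ∈ X ∪ Y)
    (h : QBFTrue X Θ) :
    ∃ B : Fml, Binary B ∧ Tautology B ∧ InstanceOf (fQBF X Θ) B :=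
  qbf_true_implies_binary_instance_general X Θ h
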